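/- Let X ⊆ ℝ^d and let A ∈ Lat^d(X). Then every face of A belongs to Lat^d(X); that is, if F is a nonempty convex set with IsExtreme ℝ A F, then F ∈ Lat^d(X). -/

import Mathlib

open Set

/-- `ChLat X A` means that `A` belongs to the smallest sublattice of the lattice of
convex subsets of `ℝ^d` (with meet `∩` and join `A ∨ B = convexHull ℝ (A ∪ B)`)
containing the singleton `{x}` for every `x ∈ X`. -/
inductive ChLat {d : ℕ} (X : Set (Fin d → ℝ)) : Set (Fin d → ℝ) → Prop
  | point : ∀ x ∈ X, ChLat X {x}
  | join : ∀ A B, ChLat X A → ChLat X B → ChLat X (convexHull ℝ (A ∪ B))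
  | meet : ∀ A B, ChLat X A → ChLat X B → ChLat X (A ∩ B)

section Aux

variable {d : ℕ}

lemma ChLat.convex {X A : Set (Fin d → ℝ)} (h : ChLat X A) : Convex ℝ A := by
  induction h with
  | point x hx => exact convex_singleton x
  | join A B _ _ ihA ihB => exact convex_convexHull ℝ _
  | meet A B _ _ ihA ihB => exact ihA.inter ihB

lemma extend_beyond {F : Set (Fin d → ℝ)} {x y : Fin d → ℝ}
    (hx : x ∈ intrinsicInterior ℝ F) (hy : y ∈ F) :
    ∃ z ∈ F, x ∈ openSegment ℝ y z := by
  obtain ⟨x', hx', rfl⟩ := hx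
  have hyS : y ∈ affineSpan ℝ F := subset_affineSpan _ _ hy
  have hmem : ∀ t : ℝ, AffineMap.lineMap y (x' : Fin d → ℝ) t ∈ affineSpan ℝ F :=
    fun t => AffineMap.lineMap_mem t hyS x'.2
  have hcont : Continuous fun t : ℝ =>
      (⟨AffineMap.lineMap y (x' : Fin d → ℝ) t, hmem t⟩ : affineSpan ℝ F) := by
    apply Continuous.subtype_mk
    exact AffineMap.lineMap_continuous
  have h1 : (⟨AffineMap.lineMap y (x' : Fin d → ℝ) 1, hmem 1⟩ : affineSpan ℝ F) = x' := by
    ext; simp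
  have hopen := hcont.isOpen_preimage _
    (isOpen_interior (s := ((↑) ⁻¹' F : Set (affineSpan ℝ F))))
  have h1mem : (1 : ℝ) ∈ (fun t : ℝ =>
      (⟨AffineMap.lineMap y (x' : Fin d → ℝ) t, hmem t⟩ : affineSpan ℝ F)) ⁻¹'
      interior ((↑) ⁻¹' F : Set (affineSpan ℝ F)) := by
    simp only [mem_preimage, h1]; exact hx'
  obtain ⟨ε, hε, hball⟩ := Metric.isOpen_iff.1 hopen 1 h1mem
  have ht1 : (1:ℝ) < 1 + ε / 2 := by linarith
  have ht0 : (0:ℝ) < 1 + ε / 2 := by linarith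
  have htmem : (1 + ε/2 : ℝ) ∈ Metric.ball (1:ℝ) ε := by
    rw [Metric.mem_ball, Real.dist_eq]
    rw [abs_of_nonneg (by linarith)]
    linarith
  have hzF : AffineMap.lineMap y (x' : Fin d → ℝ) (1 + ε/2) ∈ F := by
    have := hball htmem
    simpa using interior_subset this
  refine ⟨_, hzF, ?_⟩
  refine ⟨1 - 1/(1+ε/2), 1/(1+ε/2), by rw [sub_pos, div_lt_one ht0]; linarith,
    by positivity, by ring, ?_⟩
  simp only [AffineMap.lineMap_apply_module]
  match_scalars <;> field_simp <;> ring

/-- The minimal face of `B` containing `x`: points `y ∈ B` such that the segment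
from `y` to `x` can be extended beyond `x` while staying in `B`. -/
def faceAt (B : Set (Fin d → ℝ)) (x : Fin d → ℝ) : Set (Fin d → ℝ) :=
  {y | y ∈ B ∧ ∃ δ : ℝ, 0 < δ ∧ x + δ • (x - y) ∈ B}

lemma mem_faceAt_self {B : Set (Fin d → ℝ)} {x : Fin d → ℝ} (hx : x ∈ B) : x ∈ faceAt B x :=
  ⟨hx, 1, one_pos, by simpa using hx⟩

lemma faceAt_subset {B : Set (Fin d → ℝ)} {x : Fin d → ℝ} : faceAt B x ⊆ B := fun _ h => h.1

/-- monotonicity: smaller extensions stay in `B`. -/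
lemma faceAt_mono {B : Set (Fin d → ℝ)} (hB : Convex ℝ B) {x y : Fin d → ℝ} (hx : x ∈ B)
    {δ δ' : ℝ} (h0 : 0 < δ') (hle : δ' ≤ δ) (h : x + δ • (x - y) ∈ B) :
    x + δ' • (x - y) ∈ B := by
  have hδ : 0 < δ := lt_of_lt_of_le h0 hle
  have key : x + δ' • (x - y) = (1 - δ'/δ) • x + (δ'/δ) • (x + δ • (x - y)) := by
    match_scalars <;> field_simp <;> ring
  rw [key]
  exact hB hx h (by rw [sub_nonneg, div_le_one hδ]; exact hle) (by positivity) (by ring)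

lemma faceAt_convex {B : Set (Fin d → ℝ)} (hB : Convex ℝ B) {x : Fin d → ℝ} (hx : x ∈ B) :
    Convex ℝ (faceAt B x) := by
  rintro y1 ⟨hy1B, δ1, hδ1, h1⟩ y2 ⟨hy2B, δ2, hδ2, h2⟩ l m hl hm hlm
  refine ⟨hB hy1B hy2B hl hm hlm, min δ1 δ2, lt_min hδ1 hδ2, ?_⟩
  set δ := min δ1 δ2 with hδdef
  have hδ : 0 < δ := lt_min hδ1 hδ2
  have h1' : x + δ • (x - y1) ∈ B := faceAt_mono hB hx hδ (min_le_left _ _) h1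
  have h2' : x + δ • (x - y2) ∈ B := faceAt_mono hB hx hδ (min_le_right _ _) h2
  have key : x + δ • (x - (l • y1 + m • y2)) =
      l • (x + δ • (x - y1)) + m • (x + δ • (x - y2)) := by
    have hm' : m = 1 - l := by linarith
    subst hm'
    module
  rw [key]
  exact hB h1' h2' hl hm hlm

lemma faceAt_extreme_aux {B : Set (Fin d → ℝ)} (hB : Convex ℝ B) {x : Fin d → ℝ}
    {y y1 y2 : Fin d → ℝ} (hy : y ∈ faceAt B x) (hy1 : y1 ∈ B) (hy2 : y2 ∈ B)
    (hseg : y ∈ openSegment ℝ y1 y2) : y1 ∈ faceAt B x := by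
  obtain ⟨hyB, δ, hδ, hw⟩ := hy
  obtain ⟨u, v, hu, hv, huv, hyeq⟩ := hseg
  refine ⟨hy1, δ * u / (1 + δ * v), by positivity, ?_⟩
  have hpos : (0:ℝ) < 1 + δ * v := by positivity
  have hne : (1:ℝ) + δ * v ≠ 0 := ne_of_gt hpos
  have key : x + (δ * u / (1 + δ * v)) • (x - y1) =
      (1 - δ * v / (1 + δ * v)) • (x + δ • (x - y)) + (δ * v / (1 + δ * v)) • y2 := by
    rw [← hyeq]
    have hu' : u = 1 - v := by linarith
    subst hu'
    match_scalars <;> field_simp <;> ring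
  rw [key]
  refine hB hw hy2 ?_ (by positivity) (by ring)
  rw [sub_nonneg, div_le_one hpos]
  nlinarith

lemma faceAt_extreme {B : Set (Fin d → ℝ)} (hB : Convex ℝ B) {x : Fin d → ℝ} :
    IsExtreme ℝ B (faceAt B x) := by
  refine ⟨faceAt_subset, fun y1 hy1 y2 hy2 y hy hseg => ?_⟩
  exact faceAt_extreme_aux hB hy hy1 hy2 hseg

end Aux

/-- Every face (nonempty convex extreme subset) of an element of `Lat^d(X)`
again belongs to `Lat^d(X)`. -/
theorem stmt7 {d : ℕ} (X : Set (Fin d → ℝ)) (A : Set (Fin d → ℝ)) (hA : ChLat X A)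
    (F : Set (Fin d → ℝ)) (hFne : F.Nonempty) (hFconv : Convex ℝ F)
    (hface : IsExtreme ℝ A F) :
    ChLat X F := by
  induction hA generalizing F with
  | point x hx =>
    have hFeq : F = {x} := (hFne.subset_singleton_iff).1 hface.1
    rw [hFeq]
    exact ChLat.point x hx
  | join B C hB hC ihB ihC =>
    rcases B.eq_empty_or_nonempty with rfl | hBne
    · rcases C.eq_empty_or_nonempty with rfl | hCne
      · exfalso
        obtain ⟨y, hy⟩ := hFne
        have := hface.1 hy
        simp at this
      · have hCc := hC.convex
        have heq : convexHull ℝ (∅ ∪ C) = C := by rw [empty_union, hCc.convexHull_eq]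
        rw [heq] at hface
        exact ihC F hFne hFconv hface
    rcases C.eq_empty_or_nonempty with rfl | hCne
    · have hBc := hB.convex
      have heq : convexHull ℝ (B ∪ ∅) = B := by rw [union_empty, hBc.convexHull_eq]
      rw [heq] at hface
      exact ihB F hFne hFconv hface
    have hBc := hB.convex
    have hCc := hC.convex
    have hull_eq : convexHull ℝ (B ∪ C) = convexJoin ℝ B C :=
      hBc.convexHull_union hCc hBne hCne
    have hBA : B ⊆ convexHull ℝ (B ∪ C) :=
      subset_union_left.trans (subset_convexHull ℝ _)
    have hCA : C ⊆ convexHull ℝ (B ∪ C) :=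
      subset_union_right.trans (subset_convexHull ℝ _)
    have key : ∀ p ∈ F, p ∈ convexHull ℝ ((F ∩ B) ∪ (F ∩ C)) := by
      intro p hp
      have hpA := hface.1 hp
      rw [hull_eq, mem_convexJoin] at hpA
      obtain ⟨b, hb, c, hc, u, v, hu, hv, huv, heq⟩ := hpA
      rcases eq_or_lt_of_le hu with rfl | hu'
      · have hv1 : v = 1 := by linarith
        subst hv1
        have hpc : p = c := by rw [← heq]; module
        subst hpc
        exact subset_convexHull ℝ _ (Or.inr ⟨hp, hc⟩)
      rcases eq_or_lt_of_le hv with rfl | hv'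
      · have hu1 : u = 1 := by linarith
        subst hu1
        have hpb : p = b := by rw [← heq]; module
        subst hpb
        exact subset_convexHull ℝ _ (Or.inl ⟨hp, hb⟩)
      have hbc : b ∈ F ∧ c ∈ F := ⟨hface.2 (hBA hb) (hCA hc) hp
        (show p ∈ openSegment ℝ b c from ⟨u, v, hu', hv', huv, heq⟩), hface.2 (hCA hc) (hBA hb) hp
        (by rw [openSegment_symm]; exact ⟨u, v, hu', hv', huv, heq⟩)⟩
      exact (convex_convexHull ℝ _).segment_subset
        (subset_convexHull ℝ ((F ∩ B) ∪ (F ∩ C))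
          (show b ∈ (F ∩ B) ∪ (F ∩ C) from Or.inl ⟨hbc.1, hb⟩))
        (subset_convexHull ℝ ((F ∩ B) ∪ (F ∩ C))
          (show c ∈ (F ∩ B) ∪ (F ∩ C) from Or.inr ⟨hbc.2, hc⟩))
        (⟨u, v, hu, hv, huv, heq⟩ : p ∈ segment ℝ b c)
    rcases (F ∩ B).eq_empty_or_nonempty with hFB | hFBne
    · have hFsubC : F ⊆ C := by
        intro p hp
        have h1 := key p hp
        rw [hFB, empty_union, (hFconv.inter hC.convex).convexHull_eq] at h1
        exact h1.2
      have hfaceC : IsExtreme ℝ C F :=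
        ⟨hFsubC, fun x1 hx1 x2 hx2 p hp hseg => hface.2 (hCA hx1) (hCA hx2) hp hseg⟩
      exact ihC F hFne hFconv hfaceC
    rcases (F ∩ C).eq_empty_or_nonempty with hFC | hFCne
    · have hFsubB : F ⊆ B := by
        intro p hp
        have h1 := key p hp
        rw [hFC, union_empty, (hFconv.inter hB.convex).convexHull_eq] at h1
        exact h1.2
      have hfaceB : IsExtreme ℝ B F :=
        ⟨hFsubB, fun x1 hx1 x2 hx2 p hp hseg => hface.2 (hBA hx1) (hBA hx2) hp hseg⟩
      exact ihB F hFne hFconv hfaceB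
    · have hFeq : F = convexHull ℝ ((F ∩ B) ∪ (F ∩ C)) :=
        subset_antisymm (fun p hp => key p hp)
          (convexHull_min (union_subset inter_subset_left inter_subset_left) hFconv)
      rw [hFeq]
      refine ChLat.join _ _
        (ihB _ hFBne (hFconv.inter hB.convex) ?_)
        (ihC _ hFCne (hFconv.inter hC.convex) ?_)
      · refine ⟨inter_subset_right, fun x1 hx1 x2 hx2 p hp hseg => ?_⟩
        have h2 := hface.2 (hBA hx1) (hBA hx2) hp.1 hseg
        exact ⟨h2, hx1⟩
      · refine ⟨inter_subset_right, fun x1 hx1 x2 hx2 p hp hseg => ?_⟩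
        have h2 := hface.2 (hCA hx1) (hCA hx2) hp.1 hseg
        exact ⟨h2, hx1⟩
  | meet B C hB hC ihB ihC =>
    obtain ⟨x, hxI⟩ := hFne.intrinsicInterior hFconv
    have hxF : x ∈ F := intrinsicInterior_subset hxI
    have hxB : x ∈ B := (hface.1 hxF).1
    have hxC : x ∈ C := (hface.1 hxF).2
    have hFeq : F = faceAt B x ∩ faceAt C x := by
      apply subset_antisymm
      · intro y hy
        obtain ⟨z, hzF, a, b, ha, hb, hab, heq⟩ := extend_beyond hxI hy
        have hb' : b ≠ 0 := ne_of_gt hb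
        have ha' : a = 1 - b := by linarith
        subst ha'
        have hz' : x + ((1-b)/b) • (x - y) = z := by
          rw [← heq]; match_scalars <;> field_simp <;> ring
        exact ⟨⟨(hface.1 hy).1, (1-b)/b, by positivity, by rw [hz']; exact (hface.1 hzF).1⟩,
          ⟨(hface.1 hy).2, (1-b)/b, by positivity, by rw [hz']; exact (hface.1 hzF).2⟩⟩
      · rintro y ⟨⟨hyB, δ1, hδ1, h1⟩, hyC, δ2, hδ2, h2⟩
        have hδ : 0 < min δ1 δ2 := lt_min hδ1 hδ2
        have huB : x + min δ1 δ2 • (x - y) ∈ B :=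
          faceAt_mono hB.convex hxB hδ (min_le_left _ _) h1
        have huC : x + min δ1 δ2 • (x - y) ∈ C :=
          faceAt_mono hC.convex hxC hδ (min_le_right _ _) h2
        have hne : (1:ℝ) + min δ1 δ2 ≠ 0 := by positivity
        have hseg : x ∈ openSegment ℝ y (x + min δ1 δ2 • (x - y)) := by
          refine ⟨min δ1 δ2 / (1 + min δ1 δ2), 1 / (1 + min δ1 δ2), by positivity,
            by positivity, by field_simp; ring, ?_⟩
          match_scalars <;> field_simp <;> ring
        exact hface.2 ⟨hyB, hyC⟩ ⟨huB, huC⟩ hxF hseg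
    rw [hFeq]
    exact ChLat.meet _ _
      (ihB _ ⟨x, mem_faceAt_self hxB⟩ (faceAt_convex hB.convex hxB) (faceAt_extreme hB.convex))
      (ihC _ ⟨x, mem_faceAt_self hxC⟩ (faceAt_convex hC.convex hxC) (faceAt_extreme hC.convex))
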